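/- Let n ≥ 3, 2 ≤ k ≤ n, and let λ = (λ_1, …, λ_n) ∈ Γ_k satisfy λ_2 ≥ λ_3 ≥ ⋯ ≥ λ_n, λ_1 > 0, λ_n < 0, and λ_1 ≥ δλ_2 for some δ ∈ (0,1]. Then for every 1 ≤ m ≤ k−1: λ_1 · σ_{m−1}(λ|1n) ≥ δ·(m/(n−1))·σ_m(λ|n). (Displays (2.16)–(2.17) in the proof of Lemma 2.7.) -/

import Mathlib

open Finset

noncomputable def esymm {n : ℕ} (lam : Fin n → ℝ) (m : ℤ) : ℝ :=
  if m < 0 then 0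
  else ∑ s ∈ Finset.powersetCard m.toNat Finset.univ, ∏ i ∈ s, lam i

noncomputable def esymmDel {n : ℕ} (lam : Fin n → ℝ) (i : Fin n) (m : ℤ) : ℝ :=
  if m < 0 then 0
  else ∑ s ∈ Finset.powersetCard m.toNat (Finset.univ.erase i), ∏ j ∈ s, lam j

noncomputable def esymmDelSet {n : ℕ} (lam : Fin n → ℝ) (S : Finset (Fin n)) (m : ℤ) : ℝ :=
  if m < 0 then 0
  else ∑ s ∈ Finset.powersetCard m.toNat (Finset.univ \ S), ∏ j ∈ s, lam j

def GardingCone (n k : ℕ) : Set (Fin n → ℝ) :=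
  {lam | ∀ m : ℕ, 1 ≤ m → m ≤ k → 0 < esymm lam (m : ℤ)}

noncomputable def sigmaMat {n : ℕ} (A : Matrix (Fin n) (Fin n) ℝ) (m : ℤ) : ℝ :=
  if m < 0 then 0
  else ∑ s ∈ Finset.powersetCard m.toNat (Finset.univ : Finset (Fin n)),
    (A.submatrix (fun i : {x : Fin n // x ∈ s} => (i : Fin n))
                 (fun j : {x : Fin n // x ∈ s} => (j : Fin n))).det

/-!
Differentiating `∏ (X + λ_a)` keeps its roots real (Rolle) and rescales the `σ_i`, `i ≤ j + 2`, by
positive factors, so the special case "`σ_{j+1} = 0` implies `σ_{j+2} σ_j ≤ 0`" of Newton's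
inequality reduces to `j + 2` nonzero numbers, where it says that the reciprocals, which sum to
zero, have `σ_2 ≤ 0`. Along the ray `λ + t (1, …, 1)`, `t ≥ 0`, which stays in `Γ_{k+1}` and
eventually has positive entries, `σ_k(·|i)` can therefore never vanish, so `λ|i ∈ Γ_k`.

For the estimate, `λ|n ∈ Γ_k` because `λ_n < 0`. Then `m σ_m(λ|n) = ∑_i λ_i σ_{m-1}(λ|ni)`, and the
difference of two summands is `(λ_l - λ_i) σ_{m-2}(λ|nil)`, so the summand of the largest `λ_i`
(which is `λ_1` or `λ_2`) dominates; when it is `λ_2`, use `δ λ_2 ≤ λ_1` and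
`σ_{m-1}(λ|n2) ≤ σ_{m-1}(λ|n1)`.
-/

open Polynomial

theorem Polynomial.natDegree_prod_X_add_C {ι R : Type*} [CommSemiring R] [Nontrivial R]
    (f : ι → R) (T : Finset ι) : (∏ a ∈ T, (X + C (f a))).natDegree = #T := by
  rw [natDegree_prod_of_monic _ _ fun a _ => monic_X_add_C (f a)]
  simp

theorem Polynomial.coeff_zero_le_eval {R : Type*} [Semiring R] [PartialOrder R] [IsOrderedRing R]
    {p : R[X]} (hp : ∀ n, 0 ≤ p.coeff n) {t : R} (ht : 0 ≤ t) :
    p.coeff 0 ≤ p.eval t := by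
  rw [eval_eq_sum_range]
  simpa using single_le_sum (fun n _ => mul_nonneg (hp n) (pow_nonneg ht n))
    (mem_range.2 (Nat.succ_pos p.natDegree))

theorem Polynomial.card_roots_le_iterate_derivative (p : ℝ[X]) (d : ℕ) :
    Multiset.card p.roots ≤ Multiset.card (derivative^[d] p).roots + d := by
  induction d with
  | zero => simp
  | succ d ih =>
    rw [Function.iterate_succ_apply']
    linarith [card_roots_le_derivative (derivative^[d] p)]

section Algebra

variable {ι R : Type*} [CommRing R]

/-- `σ_j` of the subfamily `(f i)_{i ∈ T}`, so that `σ_j(λ|i)` is `esymmOn λ (univ.erase i) j`. -/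
def esymmOn (f : ι → R) (T : Finset ι) (j : ℕ) : R :=
  ∑ s ∈ T.powersetCard j, ∏ i ∈ s, f i

@[simp]
theorem esymmOn_zero (f : ι → R) (T : Finset ι) : esymmOn f T 0 = 1 := by
  simp [esymmOn]

theorem esymmOn_eq_zero_of_card_lt (f : ι → R) {T : Finset ι} {j : ℕ} (h : #T < j) :
    esymmOn f T j = 0 := by
  simp [esymmOn, powersetCard_eq_empty.2 h]

theorem esymmOn_one (f : ι → R) (T : Finset ι) : esymmOn f T 1 = ∑ i ∈ T, f i := by
  simp [esymmOn, powersetCard_one]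

theorem coeff_prod_X_add_C (f : ι → R) (T : Finset ι) {j : ℕ} (hj : j ≤ #T) :
    (∏ a ∈ T, (X + C (f a))).coeff (#T - j) = esymmOn f T j := by
  rw [prod_X_add_C_coeff T f (Nat.sub_le _ _), Nat.sub_sub_self hj, esymmOn]

variable [DecidableEq ι]

theorem esymmOn_insert (f : ι → R) {T : Finset ι} {i : ι} (hi : i ∉ T) (j : ℕ) :
    esymmOn f (insert i T) (j + 1) = esymmOn f T (j + 1) + f i * esymmOn f T j := by
  have hiu : ∀ u ∈ T.powersetCard j, i ∉ u := fun u hu h => hi ((mem_powersetCard.1 hu).1 h)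
  have hdisj : Disjoint (T.powersetCard (j + 1)) ((T.powersetCard j).image (insert i)) := by
    simp only [disjoint_right, mem_image, mem_powersetCard]
    rintro _ ⟨u, -, rfl⟩ ⟨hsub, -⟩
    exact hi (hsub (mem_insert_self i u))
  have hinj : Set.InjOn (insert i) (T.powersetCard j : Set (Finset ι)) := fun u hu v hv huv => by
    rw [← erase_insert (hiu u hu), ← erase_insert (hiu v hv), huv]
  rw [esymmOn, powersetCard_succ_insert hi, sum_union hdisj, sum_image hinj, esymmOn, esymmOn,
    mul_sum]
  exact congrArg _ (sum_congr rfl fun u hu => prod_insert (hiu u hu))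

theorem esymmOn_erase (f : ι → R) {T : Finset ι} {i : ι} (hi : i ∈ T) (j : ℕ) :
    esymmOn f T (j + 1) = esymmOn f (T.erase i) (j + 1) + f i * esymmOn f (T.erase i) j := by
  conv_lhs => rw [← insert_erase hi]
  exact esymmOn_insert f (notMem_erase i T) j

theorem esymmOn_erase_sub_esymmOn_erase (f : ι → R) {T : Finset ι} {i l : ι} (hi : i ∈ T)
    (hl : l ∈ T) (hil : i ≠ l) (j : ℕ) :
    esymmOn f (T.erase i) (j + 1) - esymmOn f (T.erase l) (j + 1) =
      (f l - f i) * esymmOn f ((T.erase i).erase l) j := by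
  rw [esymmOn_erase f (mem_erase.2 ⟨hil.symm, hl⟩) j, esymmOn_erase f (mem_erase.2 ⟨hil, hi⟩) j,
    erase_right_comm]
  ring

theorem two_mul_esymmOn_two (f : ι → R) (T : Finset ι) :
    2 * esymmOn f T 2 = (∑ i ∈ T, f i) ^ 2 - ∑ i ∈ T, f i ^ 2 := by
  induction T using Finset.induction_on with
  | empty => simp [esymmOn_eq_zero_of_card_lt f (show #(∅ : Finset ι) < 2 by simp)]
  | insert a T ha ih =>
    rw [esymmOn_insert f ha 1, sum_insert ha, sum_insert ha, esymmOn_one]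
    linear_combination ih

theorem sum_mul_esymmOn_erase (f : ι → R) (T : Finset ι) (j : ℕ) :
    ∑ i ∈ T, f i * esymmOn f (T.erase i) j = (j + 1) * esymmOn f T (j + 1) := by
  induction T using Finset.induction_on generalizing j with
  | empty => simp [esymmOn_eq_zero_of_card_lt f (show #(∅ : Finset ι) < j + 1 by simp)]
  | insert a T ha ih =>
    have herase : ∀ i ∈ T, (insert a T).erase i = insert a (T.erase i) := fun i hi =>
      erase_insert_of_ne fun h => ha (h ▸ hi)
    rw [sum_insert ha, erase_insert ha, sum_congr rfl fun i hi => by rw [herase i hi]]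
    cases j with
    | zero => simp [esymmOn_insert f ha 0, esymmOn_one]; ring
    | succ j =>
      have hsplit : ∀ i ∈ T, f i * esymmOn f (insert a (T.erase i)) (j + 1) =
          f i * esymmOn f (T.erase i) (j + 1) + f a * (f i * esymmOn f (T.erase i) j) :=
        fun i hi => by rw [esymmOn_insert f (fun h => ha (mem_of_mem_erase h))]; ring
      rw [sum_congr rfl hsplit, sum_add_distrib, ← mul_sum, ih, ih, esymmOn_insert f ha]
      push_cast
      ring

omit [DecidableEq ι] in
theorem esymmOn_card (f : ι → R) (T : Finset ι) : esymmOn f T #T = ∏ a ∈ T, f a := by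
  rw [esymmOn, powersetCard_self, sum_singleton]

end Algebra

section Field

variable {ι K : Type*} [DecidableEq ι] [Field K]

theorem esymmOn_card_sub {w : ι → K} {T : Finset ι} (hw : ∀ a ∈ T, w a ≠ 0) {j : ℕ}
    (hj : j ≤ #T) : esymmOn w T (#T - j) = (∏ a ∈ T, w a) * esymmOn (fun a => (w a)⁻¹) T j := by
  rw [esymmOn, esymmOn, mul_sum]
  refine sum_nbij' (T \ ·) (T \ ·) ?_ ?_ (fun s hs => ?_) (fun u hu => ?_) (fun s hs => ?_) <;>
    simp only [mem_powersetCard] at *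
  · exact fun s hs => ⟨sdiff_subset, by rw [card_sdiff_of_subset hs.1, hs.2]; omega⟩
  · exact fun u hu => ⟨sdiff_subset, by rw [card_sdiff_of_subset hu.1, hu.2]⟩
  · exact Finset.sdiff_sdiff_eq_self hs.1
  · exact Finset.sdiff_sdiff_eq_self hu.1
  · have hsub : T \ s ⊆ T := sdiff_subset
    rw [prod_inv_distrib, ← prod_sdiff hsub, Finset.sdiff_sdiff_eq_self hs.1,
      mul_inv_cancel_right₀ (prod_ne_zero_iff.2 fun a ha => hw a (hsub ha))]

variable [LinearOrder K] [IsStrictOrderedRing K]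

theorem esymmOn_add_two_mul_esymmOn_nonpos_of_card_eq (w : ι → K) {T : Finset ι} {j : ℕ}
    (hT : #T = j + 2) (h : esymmOn w T (j + 1) = 0) : esymmOn w T (j + 2) * esymmOn w T j ≤ 0 := by
  by_cases hw : ∀ a ∈ T, w a ≠ 0
  swap
  · obtain ⟨a, ha, hwa⟩ : ∃ a ∈ T, w a = 0 := by simpa using hw
    rw [← hT, esymmOn_card, prod_eq_zero ha hwa, zero_mul]
  set v : ι → K := fun a => (w a)⁻¹
  have hP : ∏ a ∈ T, w a ≠ 0 := prod_ne_zero_iff.2 hw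
  have hσ : ∀ i ≤ 2, esymmOn w T (j + 2 - i) = (∏ a ∈ T, w a) * esymmOn v T i := fun i hi => by
    rw [← hT]; exact esymmOn_card_sub hw (by omega)
  have hv1 : ∑ a ∈ T, v a = 0 := by
    have := hσ 1 (by omega)
    rwa [show j + 2 - 1 = j + 1 by omega, h, esymmOn_one, zero_eq_mul, or_iff_right hP] at this
  have hv2 : 2 * esymmOn v T 2 ≤ 0 := by
    rw [two_mul_esymmOn_two, hv1]
    nlinarith [sum_nonneg fun a (_ : a ∈ T) => sq_nonneg (v a)]
  have h0 := hσ 0 (by omega)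
  have h2 := hσ 2 le_rfl
  simp only [Nat.sub_zero, Nat.add_sub_cancel, esymmOn_zero, mul_one] at h0 h2
  rw [h0, h2]
  nlinarith [sq_nonneg (∏ a ∈ T, w a)]

end Field

section Real

variable {ι : Type*}

theorem exists_multiset_esymm_eq_mul_esymmOn (f : ι → ℝ) (T : Finset ι) {m : ℕ} (hm : m ≤ #T) :
    ∃ s : Multiset ℝ, Multiset.card s = m ∧
      ∃ c : ℕ → ℝ, ∀ i ≤ m, 0 < c i ∧ s.esymm i = c i * esymmOn f T i := by
  set P : ℝ[X] := ∏ a ∈ T, (X + C (f a))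
  have hP : P = ((T.val.map fun a => -f a).map fun r => X - C r).prod := by
    simp only [P, prod_eq_multiset_prod, Multiset.map_map, Function.comp_def, map_neg,
      sub_neg_eq_add]
  set d := #T - m
  set g := derivative^[d] P
  have hPdeg : P.natDegree = #T := natDegree_prod_X_add_C f T
  have hProots : Multiset.card P.roots = #T := by rw [hP, roots_multiset_prod_X_sub_C]; simp
  have hgdeg : g.natDegree ≤ m := (natDegree_iterate_derivative P d).trans (by omega)
  have hgroots : m ≤ Multiset.card g.roots := by
    have : Multiset.card P.roots ≤ Multiset.card g.roots + d :=
      card_roots_le_iterate_derivative P d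
    omega
  have hcard : Multiset.card g.roots = m := le_antisymm ((card_roots' g).trans hgdeg) hgroots
  have hgdeg' : g.natDegree = m := le_antisymm hgdeg (hgroots.trans (card_roots' g))
  have hgcoeff : ∀ i ≤ m, g.coeff (m - i) = (#T - i).descFactorial d * esymmOn f T i := by
    intro i hi
    rw [coeff_iterate_derivative, nsmul_eq_mul, show m - i + d = #T - i by omega,
      coeff_prod_X_add_C f T (by omega)]
  have hdesc : ∀ i ≤ m, (0 : ℝ) < (#T - i).descFactorial d := fun i hi => by
    exact_mod_cast Nat.descFactorial_pos.2 (by omega)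
  have hD : (0 : ℝ) < (#T).descFactorial d := by simpa using hdesc 0 (Nat.zero_le _)
  have hlead : g.leadingCoeff = (#T).descFactorial d := by
    rw [leadingCoeff, hgdeg', ← Nat.sub_zero m, hgcoeff 0 (Nat.zero_le _)]; simp
  refine ⟨g.roots.map Neg.neg, by rw [Multiset.card_map, hcard],
    fun i => (#T - i).descFactorial d / (#T).descFactorial d, fun i hi => ⟨?_, ?_⟩⟩
  · exact div_pos (hdesc i hi) hD
  · have hvieta := coeff_eq_esymm_roots_of_card (hcard.trans hgdeg'.symm) (k := m - i)
      (by omega)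
    rw [hgdeg', show m - (m - i) = i by omega, hgcoeff i hi, hlead] at hvieta
    rw [Multiset.esymm_neg, div_mul_eq_mul_div, hvieta, mul_assoc,
      mul_div_cancel_left₀ _ hD.ne']

theorem esymmOn_add_two_mul_esymmOn_nonpos (f : ι → ℝ) (T : Finset ι) {j : ℕ}
    (h : esymmOn f T (j + 1) = 0) : esymmOn f T (j + 2) * esymmOn f T j ≤ 0 := by
  classical
  rcases lt_or_ge #T (j + 2) with hT | hT
  · rw [esymmOn_eq_zero_of_card_lt f hT, zero_mul]
  obtain ⟨s, hs, c, hc⟩ := exists_multiset_esymm_eq_mul_esymmOn f T hT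
  have hσ : ∀ i, esymmOn (fun x : s => (x : ℝ)) univ i = s.esymm i := fun i => by
    rw [esymmOn, ← Finset.esymm_map_val, Multiset.map_univ_coe]
  have key := esymmOn_add_two_mul_esymmOn_nonpos_of_card_eq (fun x : s => (x : ℝ))
    (T := univ) (j := j) (by rw [card_univ, Multiset.card_coe, hs])
    (by rw [hσ, (hc _ (by omega)).2, h, mul_zero])
  rw [hσ, hσ, (hc _ le_rfl).2, (hc j (by omega)).2] at key
  have hpos := mul_pos (hc _ le_rfl).1 (hc j (by omega)).1
  nlinarith

end Real

section Cone

variable {ι : Type*}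

theorem esymmOn_add_const_eq_eval_hasseDeriv (f : ι → ℝ) (T : Finset ι) (t : ℝ) {j : ℕ}
    (hj : j ≤ #T) :
    esymmOn (fun a => f a + t) T j = (hasseDeriv (#T - j) (∏ a ∈ T, (X + C (f a)))).eval t := by
  rw [← coeff_prod_X_add_C _ T hj, ← taylor_coeff]
  have htaylor : taylor t (∏ a ∈ T, (X + C (f a))) = ∏ a ∈ T, taylor t (X + C (f a)) :=
    map_prod (taylorAlgHom t) _ _
  simp [htaylor, C_add, add_assoc, add_comm (C t)]

theorem esymmOn_le_esymmOn_add_const {f : ι → ℝ} {T : Finset ι} {j : ℕ}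
    (hf : ∀ i ≤ j, 0 ≤ esymmOn f T i) {t : ℝ} (ht : 0 ≤ t) :
    esymmOn f T j ≤ esymmOn (fun a => f a + t) T j := by
  rcases lt_or_ge #T j with hj | hj
  · rw [esymmOn_eq_zero_of_card_lt _ hj, esymmOn_eq_zero_of_card_lt _ hj]
  rw [esymmOn_add_const_eq_eval_hasseDeriv f T t hj]
  refine (le_of_eq ?_).trans (coeff_zero_le_eval (fun n => ?_) ht)
  · rw [hasseDeriv_coeff, zero_add, Nat.choose_self, Nat.cast_one, one_mul,
      coeff_prod_X_add_C f T hj]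
  · rw [hasseDeriv_coeff]
    refine mul_nonneg (Nat.cast_nonneg _) ?_
    rcases le_or_gt n j with hn | hn
    · rw [show n + (#T - j) = #T - (j - n) by omega, coeff_prod_X_add_C f T (by omega)]
      exact hf _ (Nat.sub_le _ _)
    · rw [coeff_eq_zero_of_natDegree_lt (by rw [natDegree_prod_X_add_C]; omega)]

theorem continuous_esymmOn_add_const (f : ι → ℝ) (T : Finset ι) (j : ℕ) :
    Continuous fun t => esymmOn (fun a => f a + t) T j := by
  unfold esymmOn
  fun_prop

def InGardingCone (k : ℕ) (T : Finset ι) (f : ι → ℝ) : Prop :=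
  ∀ j ≤ k, 0 < esymmOn f T j

variable {k : ℕ} {T : Finset ι} {f : ι → ℝ}

theorem InGardingCone.mono {k' : ℕ} (h : InGardingCone k T f) (hk : k' ≤ k) :
    InGardingCone k' T f :=
  fun j hj => h j (hj.trans hk)

theorem InGardingCone.le_card (h : InGardingCone k T f) : k ≤ #T := by
  by_contra! hk
  exact (h k le_rfl).ne' (esymmOn_eq_zero_of_card_lt f hk)

theorem inGardingCone_of_pos (hf : ∀ a ∈ T, 0 < f a) (hk : k ≤ #T) : InGardingCone k T f :=
  fun _ hj => sum_pos (fun _ hs => prod_pos fun a ha => hf a ((mem_powersetCard.1 hs).1 ha))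
    (powersetCard_nonempty.2 (hj.trans hk))

theorem InGardingCone.add_const (h : InGardingCone k T f) {t : ℝ} (ht : 0 ≤ t) :
    InGardingCone k T fun a => f a + t :=
  fun j hj => (h j hj).trans_le
    (esymmOn_le_esymmOn_add_const (fun i hi => (h i (hi.trans hj)).le) ht)

variable [DecidableEq ι]

theorem InGardingCone.erase_of_nonpos (h : InGardingCone k T f) {i : ι} (hi : i ∈ T)
    (hfi : f i ≤ 0) : InGardingCone k (T.erase i) f := by
  intro j hj
  induction j with
  | zero => simp
  | succ j ih =>
    have := esymmOn_erase f hi j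
    nlinarith [h (j + 1) hj, ih (by omega)]

theorem InGardingCone.esymmOn_erase_pos (h : InGardingCone (k + 1) T f) {i : ι} (hi : i ∈ T) :
    0 < esymmOn f (T.erase i) k := by
  induction k generalizing f with
  | zero => simp
  | succ k ih =>
    -- at a zero of `σ_{k+1}(·|i)` on the ray, Newton's inequality would give `σ_{k+2} ≤ 0`
    have hne : ∀ t, 0 ≤ t → esymmOn (fun a => f a + t) (T.erase i) (k + 1) ≠ 0 := by
      intro t ht h0
      have hg := h.add_const ht
      have hsplit := esymmOn_erase (fun a => f a + t) hi (k + 1)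
      rw [h0, mul_zero, add_zero] at hsplit
      nlinarith [hg (k + 2) le_rfl, ih (hg.mono (by omega)),
        esymmOn_add_two_mul_esymmOn_nonpos (fun a => f a + t) (T.erase i) h0]
    set t₀ := ∑ a ∈ T, |f a| + 1
    have hpos : 0 < esymmOn (fun a => f a + t₀) (T.erase i) (k + 1) := by
      refine inGardingCone_of_pos (fun a ha => ?_) ?_ (k + 1) le_rfl
      · have := single_le_sum (fun b _ => abs_nonneg (f b)) (mem_of_mem_erase ha)
        linarith [neg_le_abs (f a)]
      · have := h.le_card
        rw [card_erase_of_mem hi]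
        omega
    by_contra! hle
    obtain ⟨t, ht, hzero⟩ := intermediate_value_Icc (by positivity : (0 : ℝ) ≤ t₀)
      (continuous_esymmOn_add_const f (T.erase i) (k + 1)).continuousOn
      ⟨by simpa using hle, hpos.le⟩
    exact hne t ht.1 hzero

theorem InGardingCone.erase (h : InGardingCone (k + 1) T f) {i : ι} (hi : i ∈ T) :
    InGardingCone k (T.erase i) f :=
  fun j hj => (h.mono (by omega : j + 1 ≤ k + 1)).esymmOn_erase_pos hi

end Cone

section Estimate

variable {ι : Type*} [DecidableEq ι] {T : Finset ι} {f : ι → ℝ} {j : ℕ}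

theorem InGardingCone.esymmOn_erase_le_esymmOn_erase (h : InGardingCone (j + 1) T f) {a b : ι}
    (ha : a ∈ T) (hb : b ∈ T) (hab : f a ≤ f b) :
    esymmOn f (T.erase b) j ≤ esymmOn f (T.erase a) j := by
  rcases eq_or_ne a b with rfl | hne
  · exact le_rfl
  cases j with
  | zero => simp
  | succ j =>
    have hσ := (h.erase ha).erase (mem_erase.2 ⟨hne.symm, hb⟩) j le_rfl
    nlinarith [esymmOn_erase_sub_esymmOn_erase f ha hb hne j]

theorem InGardingCone.mul_esymmOn_erase_le (h : InGardingCone (j + 2) T f) {i l : ι}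
    (hi : i ∈ T) (hl : l ∈ T) (hil : f i ≤ f l) :
    f i * esymmOn f (T.erase i) j ≤ f l * esymmOn f (T.erase l) j := by
  rcases eq_or_ne i l with rfl | hne
  · exact le_rfl
  have hσ := (h.erase hi).erase (mem_erase.2 ⟨hne.symm, hl⟩) j le_rfl
  nlinarith [esymmOn_erase_sub_esymmOn_erase f hi hl hne j, esymmOn_erase f hi j,
    esymmOn_erase f hl j]

theorem InGardingCone.mul_esymmOn_le (h : InGardingCone (j + 2) T f) {l : ι} (hl : l ∈ T)
    (hmax : ∀ i ∈ T, f i ≤ f l) :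
    (j + 1) * esymmOn f T (j + 1) ≤ #T * (f l * esymmOn f (T.erase l) j) := by
  rw [← sum_mul_esymmOn_erase, ← nsmul_eq_mul, ← sum_const]
  exact sum_le_sum fun i hi => h.mul_esymmOn_erase_le hi hl (hmax i hi)

theorem InGardingCone.le_mul_esymmOn_erase (h : InGardingCone (j + 2) T f) {a b : ι}
    (ha : a ∈ T) (hb : b ∈ T) (hmax : ∀ i ∈ T, i ≠ a → f i ≤ f b) (hfa : 0 ≤ f a) {δ : ℝ}
    (hδ0 : 0 ≤ δ) (hδ1 : δ ≤ 1) (hδ : δ * f b ≤ f a) :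
    δ * ((j + 1) / #T) * esymmOn f T (j + 1) ≤ f a * esymmOn f (T.erase a) j := by
  have hσ : ∀ l ∈ T, 0 ≤ esymmOn f (T.erase l) j :=
    fun l hl => ((h.mono (by omega)).erase hl j le_rfl).le
  have hT : (0 : ℝ) < #T := by exact_mod_cast card_pos.2 ⟨a, ha⟩
  suffices δ * ((j + 1) * esymmOn f T (j + 1)) ≤ #T * (f a * esymmOn f (T.erase a) j) by
    rw [show δ * ((j + 1) / #T) * esymmOn f T (j + 1) = δ * ((j + 1) * esymmOn f T (j + 1)) / #T
      by ring, div_le_iff₀ hT]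
    linarith
  rcases le_total (f b) (f a) with hba | hab
  · have hmaxa : ∀ i ∈ T, f i ≤ f a := fun i hi =>
      if hia : i = a then hia ▸ le_rfl else (hmax i hi hia).trans hba
    calc δ * ((j + 1) * esymmOn f T (j + 1))
        ≤ δ * (#T * (f a * esymmOn f (T.erase a) j)) :=
          mul_le_mul_of_nonneg_left (h.mul_esymmOn_le ha hmaxa) hδ0
      _ ≤ #T * (f a * esymmOn f (T.erase a) j) :=
          mul_le_of_le_one_left (by have := hσ a ha; positivity) hδ1
  · have hmaxb : ∀ i ∈ T, f i ≤ f b := fun i hi =>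
      if hia : i = a then hia ▸ hab else hmax i hi hia
    calc δ * ((j + 1) * esymmOn f T (j + 1))
        ≤ δ * (#T * (f b * esymmOn f (T.erase b) j)) :=
          mul_le_mul_of_nonneg_left (h.mul_esymmOn_le hb hmaxb) hδ0
      _ = #T * (δ * f b * esymmOn f (T.erase b) j) := by ring
      _ ≤ #T * (f a * esymmOn f (T.erase b) j) := by gcongr; exact hσ b hb
      _ ≤ #T * (f a * esymmOn f (T.erase a) j) := by
          gcongr; exact (h.mono (by omega)).esymmOn_erase_le_esymmOn_erase ha hb hab

end Estimate

section FinIndexed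

variable {n : ℕ} (lam : Fin n → ℝ)

theorem esymm_natCast (j : ℕ) : esymm lam j = esymmOn lam univ j := by
  simp [esymm, esymmOn]

theorem esymmDel_natCast (i : Fin n) (j : ℕ) :
    esymmDel lam i j = esymmOn lam (univ.erase i) j := by
  simp [esymmDel, esymmOn]

theorem esymmDelSet_natCast (S : Finset (Fin n)) (j : ℕ) :
    esymmDelSet lam S j = esymmOn lam (univ \ S) j := by
  simp [esymmDelSet, esymmOn]

theorem mem_gardingCone_iff {k : ℕ} : lam ∈ GardingCone n k ↔ InGardingCone k univ lam := by
  refine ⟨fun h j hj => ?_, fun h j hj1 hjk => esymm_natCast lam j ▸ h j hjk⟩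
  rcases Nat.eq_zero_or_pos j with rfl | hj0
  · simp
  · exact esymm_natCast lam j ▸ h j hj0 hj

end FinIndexed

/-- Displays (2.16)–(2.17): if n ≥ 3, 2 ≤ k ≤ n, λ ∈ Γ_k with λ₂ ≥ ⋯ ≥ λₙ,
λ₁ > 0, λₙ < 0 and λ₁ ≥ δλ₂ for some δ ∈ (0,1], then for every 1 ≤ m ≤ k−1,
λ₁·σ_{m−1}(λ|1n) ≥ δ·(m/(n−1))·σ_m(λ|n). -/
theorem lam1_mul_esymmDel_ge (n k : ℕ) (hn : 3 ≤ n)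
    (lam : Fin n → ℝ) (δ : ℝ) (hδ0 : 0 < δ) (hδ1 : δ ≤ 1)
    (hlam : lam ∈ GardingCone n k)
    (hsort : ∀ i j : Fin n, 1 ≤ (i : ℕ) → i ≤ j → lam j ≤ lam i)
    (h1pos : 0 < lam ⟨0, by omega⟩)
    (hnneg : lam ⟨n - 1, by omega⟩ < 0)
    (hδlam : lam ⟨0, by omega⟩ ≥ δ * lam ⟨1, by omega⟩) :
    ∀ m : ℕ, 1 ≤ m → m ≤ k - 1 →
      lam ⟨0, by omega⟩ *
          esymmDelSet lam {⟨0, by omega⟩, ⟨n - 1, by omega⟩} ((m : ℤ) - 1)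
        ≥ δ * ((m : ℝ) / ((n : ℝ) - 1)) * esymmDel lam ⟨n - 1, by omega⟩ (m : ℤ) := by
  rintro m hm1 hmk
  obtain ⟨j, rfl⟩ : ∃ j, m = j + 1 := ⟨m - 1, by omega⟩
  set a : Fin n := ⟨0, by omega⟩
  set z : Fin n := ⟨n - 1, by omega⟩
  have haz : a ≠ z := Fin.ne_of_val_ne (by simp [a, z]; omega)
  have hcone : InGardingCone (j + 2) (univ.erase z) lam :=
    (((mem_gardingCone_iff lam).1 hlam).erase_of_nonpos (mem_univ z) hnneg.le).mono (by omega)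
  have hcard : ((#(univ.erase z) : ℕ) : ℝ) = n - 1 := by
    rw [card_erase_of_mem (mem_univ z), card_univ, Fintype.card_fin, Nat.cast_sub (by omega)]
    simp
  have hsdiff : univ \ {a, z} = (univ.erase z).erase a := by
    ext; simp [and_comm]
  have hmax : ∀ i ∈ univ.erase z, i ≠ a → lam i ≤ lam ⟨1, by omega⟩ := fun i _ hia =>
    hsort _ i le_rfl (Fin.le_def.2 (Nat.one_le_iff_ne_zero.2 fun h => hia (Fin.ext h)))
  have key := hcone.le_mul_esymmOn_erase (mem_erase.2 ⟨haz, mem_univ a⟩)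
    (mem_erase.2 ⟨Fin.ne_of_val_ne (by simp [z]; omega), mem_univ _⟩) hmax h1pos.le hδ0.le hδ1
    hδlam
  rw [hcard] at key
  rw [show ((j + 1 : ℕ) : ℤ) - 1 = (j : ℤ) by push_cast; ring, esymmDelSet_natCast, hsdiff,
    esymmDel_natCast]
  exact_mod_cast key
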